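/- Let g be a bijection of ℤ with bounded displacement and a_{n,j} = exp(-n·e^{-|j|/n}). Then Σ_{j∈ℤ} (a_{n,j}²/(1+a_{n,j}²))²·(a_{n,g(j)}/a_{n,j} - 1)² ≤ C''²/n, where C'' is a constant depending only on w(g) = sup_j|g(j)-j|; in particular this sum tends to 0 as n → ∞. -/

import Mathlib

open Filter

/-- `a n j = exp (-n e^{-|j|/n})`. -/
noncomputable def a (n : ℕ) (j : ℤ) : ℝ :=
  Real.exp (-(n : ℝ) * Real.exp (-|(j : ℝ)| / n))

/-!
Write `t_j = e^{-|j|/n}`, so that `a n j = exp (-n t_j)`. The ratio `a n (g j) / a n j` is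
`exp (n (t_j - t_{g j}))`, and `|t_j - t_{g j}| ≤ (w/n) e^w t_j`; applying `|e^x - 1| ≤ |x| e^|x|`
twice gives `|a n (g j) / a n j - 1| ≤ C t_j` with `C = w e^w e^{w e^w}`. Hence the `j`-th summand
is at most `C² t_j² e^{-4n t_j}`.

For `s_k = e^{-k/n}` the gaps satisfy `s_k - s_{k+1} ≥ s_k / (2n)`, and `s e^{-2ns} ≤ 1/(2n)`, so
`s_k² e^{-4n s_k} ≤ (s_k - s_{k+1}) e^{-2n s_k} ≤ (E_{k+1} - E_k) / (2n)` with `E_k = e^{-2n s_k}`.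
The sum over `k` telescopes to at most `1/(2n)`, and summing over both signs of `j` gives `C²/n`.
-/

open Real Finset

lemma abs_exp_sub_one_le_abs_mul_exp_abs (x : ℝ) : |exp x - 1| ≤ |x| * exp |x| := by
  have h₁ := add_one_le_exp x
  have h₂ := add_one_le_exp (-x)
  have h₃ : exp x * exp (-x) = 1 := by rw [← exp_add, add_neg_cancel, exp_zero]
  have h₄ := exp_pos x
  have h₅ := exp_pos (-x)
  rcases le_total 0 x with hx | hx
  · rw [abs_of_nonneg hx, abs_of_nonneg (by linarith)]
    nlinarith
  · rw [abs_of_nonpos hx, abs_of_nonpos (by linarith [exp_le_one_iff.2 hx])]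
    nlinarith

lemma abs_exp_neg_sub_exp_neg_le (u v : ℝ) :
    |exp (-u) - exp (-v)| ≤ |u - v| * exp |u - v| * exp (-u) := by
  have : exp (-u) - exp (-v) = -(exp (-u) * (exp (u - v) - 1)) := by
    rw [mul_sub, ← exp_add]; ring_nf
  rw [this, abs_neg, abs_mul, abs_of_pos (exp_pos _), mul_comm]
  exact mul_le_mul_of_nonneg_right (abs_exp_sub_one_le_abs_mul_exp_abs _) (exp_pos _).le

lemma mul_exp_neg_mul_le_inv {c : ℝ} (hc : 0 < c) (s : ℝ) : s * exp (-(c * s)) ≤ c⁻¹ := by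
  have h := add_one_le_exp (c * s)
  have h' : exp (c * s) * exp (-(c * s)) = 1 := by rw [← exp_add, add_neg_cancel, exp_zero]
  rw [← one_div, le_div_iff₀' hc]
  nlinarith [exp_pos (-(c * s))]

lemma sub_mul_exp_neg_mul_le {c : ℝ} (hc : 0 < c) (s s' : ℝ) :
    (s - s') * exp (-(c * s)) ≤ (exp (-(c * s')) - exp (-(c * s))) / c := by
  have h := add_one_le_exp (c * (s - s'))
  have h' : exp (c * (s - s')) * exp (-(c * s)) = exp (-(c * s')) := by
    rw [← exp_add]; ring_nf
  rw [le_div_iff₀ hc]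
  nlinarith [exp_pos (-(c * s))]

lemma le_two_mul_one_sub_exp_neg {x : ℝ} (hx₀ : 0 ≤ x) (hx₁ : x ≤ 1) :
    x ≤ 2 * (1 - exp (-x)) := by
  have h := add_one_le_exp x
  have h' : exp x * exp (-x) = 1 := by rw [← exp_add, add_neg_cancel, exp_zero]
  nlinarith [exp_pos (-x)]

lemma sq_mul_exp_neg_le {c s s' : ℝ} (hc : 0 < c) (hs : 0 ≤ s) (hss' : s ≤ c * (s - s')) :
    s ^ 2 * exp (-(2 * c * s)) ≤ (exp (-(c * s')) - exp (-(c * s))) / c := by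
  have hsplit : s ^ 2 * exp (-(2 * c * s)) = s * (s * exp (-(c * s))) * exp (-(c * s)) := by
    rw [show -(2 * c * s) = -(c * s) + -(c * s) by ring, exp_add]; ring
  calc s ^ 2 * exp (-(2 * c * s)) ≤ c * (s - s') * c⁻¹ * exp (-(c * s)) := by
        rw [hsplit]
        gcongr
        · exact hs.trans hss'
        · exact mul_exp_neg_mul_le_inv hc s
    _ = (s - s') * exp (-(c * s)) := by field_simp
    _ ≤ _ := sub_mul_exp_neg_mul_le hc s s'

lemma tsum_int_le_two_mul_tsum_nat {f : ℤ → ℝ} {g : ℕ → ℝ} (hf : ∀ j, 0 ≤ f j)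
    (hfg : ∀ j, f j ≤ g j.natAbs) (hg : Summable g) : ∑' j, f j ≤ 2 * ∑' k, g k := by
  have hG : Summable fun j : ℤ => g j.natAbs :=
    Summable.of_nat_of_neg (by simpa using hg) (by simpa using hg)
  have hfold := tsum_nat_add_neg hG
  simp only [Int.natAbs_natCast, Int.natAbs_neg, Int.natAbs_zero, ← two_mul,
    tsum_mul_left] at hfold
  have hg0 : 0 ≤ g 0 := (hf 0).trans (hfg 0)
  calc ∑' j, f j ≤ ∑' j : ℤ, g j.natAbs := (hG.of_nonneg_of_le hf hfg).tsum_le_tsum hfg hG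
    _ ≤ 2 * ∑' k, g k := by linarith

lemma a_div_a_eq_exp (n : ℕ) (m j : ℤ) :
    a n m / a n j = exp (n * (exp (-(|(j : ℝ)| / n)) - exp (-(|(m : ℝ)| / n)))) := by
  rw [a, a, ← exp_sub, neg_div, neg_div]
  ring_nf

lemma abs_a_div_a_sub_one_le {w : ℝ} {n : ℕ} (hn : 0 < n) {m j : ℤ} (hmj : |(m : ℝ) - j| ≤ w) :
    |a n m / a n j - 1| ≤ w * exp w * exp (w * exp w) * exp (-(|(j : ℝ)| / n)) := by
  have hn' : (1 : ℝ) ≤ n := by exact_mod_cast hn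
  have hw : 0 ≤ w := (abs_nonneg _).trans hmj
  set δ := |(j : ℝ)| / n - |(m : ℝ)| / n with hδ_def
  have hδ : n * |δ| ≤ w := by
    rw [hδ_def, div_sub_div_same, abs_div, Nat.abs_cast, mul_div_cancel₀ _ (by positivity)]
    exact (abs_abs_sub_abs_le_abs_sub _ _).trans (abs_sub_comm (m : ℝ) j ▸ hmj)
  have hδw : |δ| ≤ w := by nlinarith [abs_nonneg δ]
  set t := exp (-(|(j : ℝ)| / n))
  have ht : t ≤ 1 := exp_le_one_iff.2 (neg_nonpos.2 (by positivity))
  set x := n * (t - exp (-(|(m : ℝ)| / n)))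
  have hx : |x| ≤ w * exp w * t :=
    calc |x| ≤ n * (|δ| * exp |δ| * t) := by
          rw [abs_mul, Nat.abs_cast]
          gcongr
          exact abs_exp_neg_sub_exp_neg_le _ _
      _ = n * |δ| * exp |δ| * t := by ring
      _ ≤ w * exp w * t := by gcongr
  have hx' : |x| ≤ w * exp w := hx.trans (mul_le_of_le_one_right (by positivity) ht)
  rw [a_div_a_eq_exp]
  calc _ ≤ |x| * exp |x| := abs_exp_sub_one_le_abs_mul_exp_abs x
    _ ≤ w * exp w * t * exp (w * exp w) := by gcongr
    _ = _ := by ring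

/-- At `x = |j|` this is `t_j² (a n j)⁴` with `t_j = e^{-|j|/n}`. -/
noncomputable def envelope (n : ℕ) (x : ℝ) : ℝ :=
  exp (-(x / n)) ^ 2 * exp (-(4 * n * exp (-(x / n))))

lemma envelope_nonneg (n : ℕ) (x : ℝ) : 0 ≤ envelope n x := by
  unfold envelope; positivity

lemma sum_range_envelope_le {n : ℕ} (hn : 0 < n) (N : ℕ) :
    ∑ k ∈ range N, envelope n k ≤ 1 / (2 * n) := by
  have hn' : (1 : ℝ) ≤ n := by exact_mod_cast hn
  set E : ℕ → ℝ := fun k => exp (-(2 * n * exp (-(k / n : ℝ))))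
  have hstep : ∀ k : ℕ, envelope n k ≤ (E (k + 1) - E k) / (2 * n) := by
    intro k
    have hsucc : exp (-((k + 1 : ℕ) / n : ℝ)) = exp (-(k / n : ℝ)) * exp (-(1 / n : ℝ)) := by
      rw [← exp_add]; push_cast; ring_nf
    have hgap := le_two_mul_one_sub_exp_neg (x := 1 / n) (by positivity)
      ((div_le_one (by positivity)).2 hn')
    convert sq_mul_exp_neg_le (c := 2 * n) (s' := exp (-((k + 1 : ℕ) / n : ℝ))) (by positivity)
      (exp_pos _).le ?_ using 3
    · rw [envelope]; ring_nf
    · rw [hsucc]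
      have := (div_le_iff₀' (by positivity)).1 hgap
      nlinarith [exp_pos (-(k / n : ℝ))]
  calc _ ≤ ∑ k ∈ range N, (E (k + 1) - E k) / (2 * n) := sum_le_sum fun k _ => hstep k
    _ = (E N - E 0) / (2 * n) := by rw [← sum_div, sum_range_sub]
    _ ≤ 1 / (2 * n) := by
        gcongr
        have : E N ≤ 1 := exp_le_one_iff.2 (neg_nonpos.2 (by positivity))
        linarith [show 0 < E 0 from exp_pos _]

lemma summable_envelope {n : ℕ} (hn : 0 < n) : Summable fun k : ℕ => envelope n k :=
  summable_of_sum_range_le (fun _ => envelope_nonneg _ _) (sum_range_envelope_le hn)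

lemma tsum_envelope_le {n : ℕ} (hn : 0 < n) : ∑' k : ℕ, envelope n k ≤ 1 / (2 * n) :=
  Real.tsum_le_of_sum_range_le (fun _ => envelope_nonneg _ _) (sum_range_envelope_le hn)

lemma summand_le_envelope {w : ℝ} {n : ℕ} (hn : 0 < n) {m j : ℤ} (hmj : |(m : ℝ) - j| ≤ w) :
    (a n j ^ 2 / (1 + a n j ^ 2)) ^ 2 * (a n m / a n j - 1) ^ 2 ≤
      (w * exp w * exp (w * exp w)) ^ 2 * envelope n |(j : ℝ)| := by
  have ha : (a n j ^ 2 / (1 + a n j ^ 2)) ^ 2 ≤ exp (-(4 * n * exp (-(|(j : ℝ)| / n)))) := by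
    calc (a n j ^ 2 / (1 + a n j ^ 2)) ^ 2 ≤ (a n j ^ 2) ^ 2 := by
          gcongr
          exact div_le_self (sq_nonneg _) (le_add_of_nonneg_right (sq_nonneg _))
      _ = _ := by rw [a, ← pow_mul, ← exp_nat_mul, neg_div]; ring_nf
  have hr := abs_a_div_a_sub_one_le hn hmj
  have hr2 := sq_le_sq' (neg_le_of_abs_le hr) (le_of_abs_le hr)
  calc _ ≤ exp (-(4 * n * exp (-(|(j : ℝ)| / n)))) *
        (w * exp w * exp (w * exp w) * exp (-(|(j : ℝ)| / n))) ^ 2 := by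
        gcongr
    _ = _ := by rw [envelope]; ring

theorem sum1_estimate (w : ℝ) :
    ∃ C'' : ℝ, ∀ g : Equiv.Perm ℤ, (∀ j : ℤ, |(g j : ℝ) - j| ≤ w) →
      (∀ n : ℕ, 0 < n →
        ∑' j : ℤ, (a n j ^ 2 / (1 + a n j ^ 2)) ^ 2 * (a n (g j) / a n j - 1) ^ 2
          ≤ C'' ^ 2 / n) ∧
      Tendsto (fun n : ℕ =>
          ∑' j : ℤ, (a n j ^ 2 / (1 + a n j ^ 2)) ^ 2 * (a n (g j) / a n j - 1) ^ 2)
        atTop (nhds 0) := by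
  set C := w * exp w * exp (w * exp w)
  refine ⟨C, fun g hg => ?_⟩
  have hbound : ∀ n : ℕ, 0 < n →
      ∑' j : ℤ, (a n j ^ 2 / (1 + a n j ^ 2)) ^ 2 * (a n (g j) / a n j - 1) ^ 2 ≤ C ^ 2 / n := by
    intro n hn
    calc _ ≤ 2 * ∑' k : ℕ, C ^ 2 * envelope n k := by
          refine tsum_int_le_two_mul_tsum_nat (fun j => by positivity) (fun j => ?_)
            ((summable_envelope hn).mul_left _)
          rw [Nat.cast_natAbs, Int.cast_abs]
          exact summand_le_envelope hn (hg j)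
      _ = 2 * C ^ 2 * ∑' k : ℕ, envelope n k := by rw [tsum_mul_left]; ring
      _ ≤ 2 * C ^ 2 * (1 / (2 * n)) := by gcongr; exact tsum_envelope_le hn
      _ = C ^ 2 / n := by field_simp
  refine ⟨hbound, tendsto_of_tendsto_of_tendsto_of_le_of_le' tendsto_const_nhds
    (tendsto_const_div_atTop_nhds_zero_nat (C ^ 2)) (Eventually.of_forall fun n => ?_) ?_⟩
  · exact tsum_nonneg fun j => by positivity
  · filter_upwards [eventually_gt_atTop 0] with n hn using hbound n hn
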